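/- arXiv:2512.16216 — 2 statements merged into one kernel-verified Lean document; each statement's English description precedes it below -/
import Mathlib

section
/- Let M : ℝ³ → ℝ³ be a C² diffeomorphism with Jacobian J_M and determinant J_d = det J_M > 0, and let v be the Piola transform of a C¹ vector field v̂, i.e. v ∘ M = J_d⁻¹ J_M v̂. Then the gradient of v satisfies (∇v) ∘ M = J_d⁻¹ J_M (∇̂ v̂) J_M⁻¹ − J_d⁻² J_M C J_M⁻¹ + J_d⁻¹ D J_M⁻¹, where C_{ij} = v̂_i ∂J_d/∂x̂_j and D_{ij} = Σ_k v̂_k ∂²x_i/(∂x̂_j ∂x̂_k). -/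
/-!
Differentiate `v ∘ M = J_d⁻¹ J_M v̂`. By the chain rule the left side has Jacobian
`(∇v ∘ M) J_M`; by the product rule the right side has Jacobian
`J_d⁻¹ J_M ∇̂v̂ + J_M (v̂ ⊗ ∇̂(J_d⁻¹)) + J_d⁻¹ D`, where `D` collects the derivatives of the entries
of `J_M`, and `∇̂(J_d⁻¹) = -J_d⁻² ∇̂J_d` turns the middle term into `-J_d⁻² J_M C`.
Multiplying on the right by `J_M⁻¹` gives the formula.
-/

/-- The Jacobian matrix of a map `f : ℝ³ → ℝ³` at a point `x`:
entry `(i, j)` is `∂ f_i / ∂ x_j`. -/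
noncomputable def jacMat (f : (Fin 3 → ℝ) → (Fin 3 → ℝ)) (x : Fin 3 → ℝ) :
    Matrix (Fin 3) (Fin 3) ℝ :=
  Matrix.of fun i j => fderiv ℝ f x (Pi.single j 1) i

theorem Differentiable.matrix_det {𝕜 E n : Type*} [NontriviallyNormedField 𝕜]
    [NormedAddCommGroup E] [NormedSpace 𝕜 E] [Fintype n] [DecidableEq n]
    {A : E → Matrix n n 𝕜} (hA : ∀ i j, Differentiable 𝕜 fun z => A z i j) :
    Differentiable 𝕜 fun z => (A z).det := by
  simp only [Matrix.det_apply]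
  fun_prop

section jacMat

variable {f g : (Fin 3 → ℝ) → (Fin 3 → ℝ)} {x : Fin 3 → ℝ}

theorem jacMat_eq_toMatrix' : jacMat f x = LinearMap.toMatrix' (fderiv ℝ f x).toLinearMap := by
  ext i j
  simp [jacMat, LinearMap.toMatrix'_apply]

theorem jacMat_apply (hf : DifferentiableAt ℝ f x) (i j : Fin 3) :
    jacMat f x i j = fderiv ℝ (fun z => f z i) x (Pi.single j 1) := by
  rw [fderiv_apply hf i]
  rfl

theorem jacMat_comp (hg : DifferentiableAt ℝ g (f x)) (hf : DifferentiableAt ℝ f x) :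
    jacMat (g ∘ f) x = jacMat g (f x) * jacMat f x := by
  rw [jacMat_eq_toMatrix', fderiv_comp x hg hf, ContinuousLinearMap.toLinearMap_comp, LinearMap.toMatrix'_comp,
    ← jacMat_eq_toMatrix', ← jacMat_eq_toMatrix']

theorem jacMat_eq_jacMat_comp_mul_inv (hg : DifferentiableAt ℝ g (f x))
    (hf : DifferentiableAt ℝ f x) (hdet : (jacMat f x).det ≠ 0) :
    jacMat g (f x) = jacMat (g ∘ f) x * (jacMat f x)⁻¹ := by
  rw [jacMat_comp hg hf, Matrix.mul_nonsing_inv_cancel_right _ _ hdet.isUnit]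

theorem differentiable_jacMat_apply (hf : ContDiff ℝ 2 f) (i j : Fin 3) :
    Differentiable ℝ fun z => jacMat f z i j := by
  have hcol : ContDiff ℝ 1 fun z => fderiv ℝ f z (Pi.single j 1) :=
    (hf.fderiv_right (by norm_num)).clm_apply contDiff_const
  exact (contDiff_pi.mp hcol i).differentiable one_ne_zero

end jacMat

section ProductRule

variable {c : (Fin 3 → ℝ) → ℝ} {c' : (Fin 3 → ℝ) →L[ℝ] ℝ}
  {A : (Fin 3 → ℝ) → Matrix (Fin 3) (Fin 3) ℝ} {u : (Fin 3 → ℝ) → (Fin 3 → ℝ)} {y : Fin 3 → ℝ}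

theorem hasFDerivAt_smul_mulVec_apply (hc : HasFDerivAt c c' y)
    (hA : ∀ i k, DifferentiableAt ℝ (fun z => A z i k) y) (hu : DifferentiableAt ℝ u y)
    (i : Fin 3) :
    HasFDerivAt (fun z => (c z • (A z).mulVec (u z)) i)
      (c y • ∑ k, (A y i k • fderiv ℝ (fun z => u z k) y +
          u y k • fderiv ℝ (fun z => A z i k) y) + (∑ k, A y i k * u y k) • c') y := by
  have hsum : HasFDerivAt (fun z => ∑ k, A z i k * u z k)
      (∑ k, (A y i k • fderiv ℝ (fun z => u z k) y +
        u y k • fderiv ℝ (fun z => A z i k) y)) y :=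
    HasFDerivAt.fun_sum fun k _ =>
      (hA i k).hasFDerivAt.mul (differentiableAt_pi.mp hu k).hasFDerivAt
  have hcomp : (fun z => (c z • (A z).mulVec (u z)) i) = fun z => c z * ∑ k, A z i k * u z k := by
    ext z
    simp [Matrix.mulVec, dotProduct]
  rw [hcomp]
  exact hc.mul hsum

theorem differentiableAt_smul_mulVec (hc : DifferentiableAt ℝ c y)
    (hA : ∀ i k, DifferentiableAt ℝ (fun z => A z i k) y) (hu : DifferentiableAt ℝ u y) :
    DifferentiableAt ℝ (fun z => c z • (A z).mulVec (u z)) y :=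
  differentiableAt_pi.mpr fun i =>
    (hasFDerivAt_smul_mulVec_apply hc.hasFDerivAt hA hu i).differentiableAt

theorem jacMat_smul_mulVec (hc : HasFDerivAt c c' y)
    (hA : ∀ i k, DifferentiableAt ℝ (fun z => A z i k) y) (hu : DifferentiableAt ℝ u y) :
    jacMat (fun z => c z • (A z).mulVec (u z)) y =
      c y • (A y * jacMat u y)
      + A y * Matrix.of (fun i j => u y i * c' (Pi.single j 1))
      + c y • Matrix.of fun i j =>
          ∑ k, u y k * fderiv ℝ (fun z => A z i k) y (Pi.single j 1) := by
  ext i j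
  rw [jacMat_apply (differentiableAt_smul_mulVec hc.differentiableAt hA hu),
    (hasFDerivAt_smul_mulVec_apply hc hA hu i).fderiv]
  simp only [jacMat_apply hu, add_apply, smul_apply, smul_eq_mul, Matrix.add_apply,
    Matrix.smul_apply, Matrix.mul_apply, Matrix.of_apply, Fin.sum_univ_three]
  ring

end ProductRule

theorem piola_gradient_general
    (M Minv : (Fin 3 → ℝ) → (Fin 3 → ℝ))
    (hM : ContDiff ℝ 2 M) (hMinv : ContDiff ℝ 2 Minv)
    (hright : Function.RightInverse Minv M)
    (hJd : ∀ x : Fin 3 → ℝ, 0 < (jacMat M x).det)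
    (vh v : (Fin 3 → ℝ) → (Fin 3 → ℝ))
    (hvh : ContDiff ℝ 1 vh)
    (hPiola : ∀ y : Fin 3 → ℝ,
      v (M y) = ((jacMat M y).det)⁻¹ • (jacMat M y).mulVec (vh y))
    (y : Fin 3 → ℝ) :
    jacMat v (M y) =
      ((jacMat M y).det)⁻¹ • (jacMat M y * jacMat vh y * (jacMat M y)⁻¹)
      - (((jacMat M y).det) ^ 2)⁻¹ •
          (jacMat M y *
            (Matrix.of fun i j =>
              vh y i * fderiv ℝ (fun z => (jacMat M z).det) y (Pi.single j 1)) *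
            (jacMat M y)⁻¹)
      + ((jacMat M y).det)⁻¹ •
          ((Matrix.of fun i j =>
              ∑ k : Fin 3,
                vh y k * fderiv ℝ (fun z => fderiv ℝ M z (Pi.single k 1) i) y (Pi.single j 1)) *
            (jacMat M y)⁻¹) := by
  set d := fun z => (jacMat M z).det
  have hd_ne (z) : d z ≠ 0 := (hJd z).ne'
  have hJ := differentiable_jacMat_apply hM
  have hd : Differentiable ℝ d := Differentiable.matrix_det hJ
  have hd_inv (z) : HasFDerivAt (fun z => (d z)⁻¹) (-(d z ^ 2)⁻¹ • fderiv ℝ d z) z := by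
    refine ((hasFDerivAt_inv (hd_ne z)).comp z (hd z).hasFDerivAt).congr_fderiv ?_
    ext h
    simp [mul_comm]
  have hvh' : Differentiable ℝ vh := hvh.differentiable one_ne_zero
  have hv : DifferentiableAt ℝ v (M y) := by
    have hv_eq : v = (fun z => (d z)⁻¹ • (jacMat M z).mulVec (vh z)) ∘ Minv :=
      funext fun x => by simpa [hright x] using hPiola (Minv x)
    rw [hv_eq]
    exact (differentiableAt_smul_mulVec (hd_inv _).differentiableAt (fun i k => hJ i k _)
      (hvh' _)).comp _ (hMinv.differentiable (by norm_num) _)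
  rw [jacMat_eq_jacMat_comp_mul_inv hv (hM.differentiable (by norm_num) y) (hd_ne y),
    show v ∘ M = _ from funext hPiola, jacMat_smul_mulVec (hd_inv y) (fun i k => hJ i k y) (hvh' y)]
  have hC : Matrix.of (fun i j => vh y i * (-(d y ^ 2)⁻¹ • fderiv ℝ d y) (Pi.single j 1)) =
      -((d y ^ 2)⁻¹ • Matrix.of fun i j => vh y i * fderiv ℝ d y (Pi.single j 1)) := by
    ext i j
    simp only [smul_apply, smul_eq_mul, Matrix.of_apply, Matrix.smul_apply, Matrix.neg_apply]
    ring
  rw [hC]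
  simp only [Matrix.add_mul, Matrix.neg_mul, Matrix.mul_neg, Matrix.smul_mul, Matrix.mul_smul,
    Matrix.mul_assoc]
  abel

/-- Gradient formula for the Piola transform: if `M` is a C² diffeomorphism
with Jacobian `J_M`, determinant `J_d > 0`, and `v ∘ M = J_d⁻¹ J_M vh` (Piola transform of a
C¹ field `vh`), then
`(∇v) ∘ M = J_d⁻¹ J_M (∇̂ vh) J_M⁻¹ − J_d⁻² J_M C J_M⁻¹ + J_d⁻¹ D J_M⁻¹`,
where `C i j = vh_i ∂J_d/∂y_j` and `D i j = Σ_k vh_k ∂²M_i/(∂y_j ∂y_k)`. -/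
theorem piola_gradient
    (M Minv : (Fin 3 → ℝ) → (Fin 3 → ℝ))
    (hM : ContDiff ℝ 2 M) (hMinv : ContDiff ℝ 2 Minv)
    (hleft : Function.LeftInverse Minv M) (hright : Function.RightInverse Minv M)
    (hJd : ∀ x : Fin 3 → ℝ, 0 < (jacMat M x).det)
    (vh v : (Fin 3 → ℝ) → (Fin 3 → ℝ))
    (hvh : ContDiff ℝ 1 vh)
    (hPiola : ∀ y : Fin 3 → ℝ,
      v (M y) = ((jacMat M y).det)⁻¹ • (jacMat M y).mulVec (vh y))
    (y : Fin 3 → ℝ) :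
    jacMat v (M y) =
      ((jacMat M y).det)⁻¹ • (jacMat M y * jacMat vh y * (jacMat M y)⁻¹)
      - (((jacMat M y).det) ^ 2)⁻¹ •
          (jacMat M y *
            (Matrix.of fun i j =>
              vh y i * fderiv ℝ (fun z => (jacMat M z).det) y (Pi.single j 1)) *
            (jacMat M y)⁻¹)
      + ((jacMat M y).det)⁻¹ •
          ((Matrix.of fun i j =>
              ∑ k : Fin 3,
                vh y k * fderiv ℝ (fun z => fderiv ℝ M z (Pi.single k 1) i) y (Pi.single j 1)) *
            (jacMat M y)⁻¹) :=
  piola_gradient_general M Minv hM hMinv hright hJd vh v hvh hPiola y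
end

section
/- Let H be a real Hilbert space, V_h ⊆ H a closed subspace, and a : H × H → ℝ a bilinear form that is coercive on V_h with constant 1/2 (a(v,v) ≥ (1/2)‖v‖²) and bounded with constant ω (|a(u,v)| ≤ ω‖u‖‖v‖). Let u ∈ H and u_h ∈ V_h. Then ‖u − u_h‖ ≤ inf_{w ∈ V_h} ((1 + 2ω)‖u − w‖) + 2 sup_{0 ≠ w ∈ V_h} |a(u − u_h, w)|/‖w‖. -/
/-! Write `v = w - u_h ∈ V_h`. Coercivity and the splitting `a(v, v) = a(w - u, v) + a(u - u_h, v)`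
give `c‖v‖² ≤ (ω‖u - w‖ + E)‖v‖`, so `c‖v‖ ≤ ω‖u - w‖ + E`; the triangle inequality
`‖u - u_h‖ ≤ ‖u - w‖ + ‖v‖` finishes the estimate. -/

theorem mul_le_of_mul_sq_le_mul {c x M : ℝ} (hx : 0 ≤ x) (hM : 0 ≤ M) (h : c * x ^ 2 ≤ M * x) :
    c * x ≤ M := by
  rcases hx.eq_or_lt with rfl | hx
  · simpa using hM
  · exact le_of_mul_le_mul_right (by linarith) hx

section

variable {F : Type*} [NormedAddCommGroup F] [NormedSpace ℝ F]

theorem LinearMap.mul_norm_sub_le_of_coercive {V : Submodule ℝ F} (a : F →ₗ[ℝ] F →ₗ[ℝ] ℝ)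
    {c ω E : ℝ} (hω : 0 ≤ ω) (hE : 0 ≤ E) (hcoer : ∀ v ∈ V, c * ‖v‖ ^ 2 ≤ a v v)
    (hbdd : ∀ x y : F, |a x y| ≤ ω * ‖x‖ * ‖y‖) {u uh w : F} (huh : uh ∈ V) (hw : w ∈ V)
    (hconsistency : ∀ v ∈ V, |a (u - uh) v| ≤ E * ‖v‖) :
    c * ‖w - uh‖ ≤ ω * ‖u - w‖ + E := by
  set v := w - uh
  have hv : v ∈ V := V.sub_mem hw huh
  have hsplit : a v v = a (w - u) v + a (u - uh) v := by
    rw [← LinearMap.add_apply, ← map_add, sub_add_sub_cancel]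
  have hcont : a (w - u) v ≤ ω * ‖u - w‖ * ‖v‖ := by
    simpa only [norm_sub_rev w u] using (le_abs_self _).trans (hbdd (w - u) v)
  have hcons : a (u - uh) v ≤ E * ‖v‖ := (le_abs_self _).trans (hconsistency v hv)
  refine mul_le_of_mul_sq_le_mul (norm_nonneg v) (by positivity) ?_
  calc c * ‖v‖ ^ 2 ≤ a v v := hcoer v hv
    _ ≤ (ω * ‖u - w‖ + E) * ‖v‖ := by rw [hsplit]; linarith

end

theorem strang_estimate_general
    {H : Type*} [NormedAddCommGroup H] [InnerProductSpace ℝ H]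
    (Vh : Submodule ℝ H)
    (a : H →ₗ[ℝ] H →ₗ[ℝ] ℝ) (ω : ℝ) (hω : 0 < ω)
    (hcoer : ∀ v ∈ Vh, (1 / 2) * ‖v‖ ^ 2 ≤ a v v)
    (hbdd : ∀ u v : H, |a u v| ≤ ω * ‖u‖ * ‖v‖)
    (u : H) (uh : H) (huh : uh ∈ Vh)
    (E : ℝ) (hE : 0 ≤ E)
    (hconsistency : ∀ w ∈ Vh, |a (u - uh) w| ≤ E * ‖w‖) :
    ∀ w ∈ Vh, ‖u - uh‖ ≤ (1 + 2 * ω) * ‖u - w‖ + 2 * E := by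
  intro w hw
  have hdiscrete : (1 / 2) * ‖w - uh‖ ≤ ω * ‖u - w‖ + E :=
    a.mul_norm_sub_le_of_coercive hω.le hE hcoer hbdd huh hw hconsistency
  calc ‖u - uh‖ ≤ ‖u - w‖ + ‖w - uh‖ := norm_sub_le_norm_sub_add_norm_sub u w uh
    _ ≤ (1 + 2 * ω) * ‖u - w‖ + 2 * E := by linarith

/-- Abstract Strang/Céa-type estimate: let `H` be a real Hilbert space,
`V_h ⊆ H` a closed subspace, `a` a bilinear form coercive on `V_h` with constant `1/2` and
bounded with constant `ω`. Then for `u ∈ H`, `u_h ∈ V_h`,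
`‖u − u_h‖ ≤ inf_{w ∈ V_h} (1 + 2ω)‖u − w‖ + 2 sup_{0≠w∈V_h} |a(u − u_h, w)|/‖w‖`.
The inf/sup are phrased via universal quantification: for any bound `E` on the consistency
term and any `w ∈ V_h`, the estimate holds. -/
theorem strang_estimate
    {H : Type*} [NormedAddCommGroup H] [InnerProductSpace ℝ H] [CompleteSpace H]
    (Vh : Submodule ℝ H) (hVh : IsClosed (Vh : Set H))
    (a : H →ₗ[ℝ] H →ₗ[ℝ] ℝ) (ω : ℝ) (hω : 0 < ω)
    (hcoer : ∀ v ∈ Vh, (1 / 2) * ‖v‖ ^ 2 ≤ a v v)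
    (hbdd : ∀ u v : H, |a u v| ≤ ω * ‖u‖ * ‖v‖)
    (u : H) (uh : H) (huh : uh ∈ Vh)
    (E : ℝ) (hE : 0 ≤ E)
    (hconsistency : ∀ w ∈ Vh, |a (u - uh) w| ≤ E * ‖w‖) :
    ∀ w ∈ Vh, ‖u - uh‖ ≤ (1 + 2 * ω) * ‖u - w‖ + 2 * E :=
  strang_estimate_general Vh a ω hω hcoer hbdd u uh huh E hE hconsistency
end
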